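/- Any two Δ-orderings arising from the same completed coloring sequence on a knot diagram yield the same attached sequence, and hence the same value of Σ a_i; in particular the Wirtinger width contribution 𝕎 of a completed coloring sequence is well-defined despite non-uniqueness of the Δ-ordering. -/

import Mathlib

/-! Combinatorial framework: knot diagrams and Wirtinger colorings. -/

structure Diagram where
  Strand : Type
  Crossing : Type
  [fintypeStrand : Fintype Strand]
  [decEqStrand : DecidableEq Strand]
  overStrand : Crossing → Strand
  under1 : Crossing → Strand
  under2 : Crossing → Strand
  under_ne : ∀ x, under1 x ≠ under2 x

attribute [instance] Diagram.fintypeStrand Diagram.decEqStrand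

/-- Two strands are adjacent if they are the two under-strands of a common crossing. -/
def Diagram.Adjacent (D : Diagram) (s s' : D.Strand) : Prop :=
  ∃ x : D.Crossing, (D.under1 x = s ∧ D.under2 x = s') ∨ (D.under1 x = s' ∧ D.under2 x = s)

/-- A set of strands is connected if it can be enumerated so that consecutive
strands are adjacent. -/
def Diagram.ConnectedSet (D : Diagram) (A : Set D.Strand) : Prop :=
  ∃ l : List D.Strand, l.Nodup ∧ (∀ s, s ∈ l ↔ s ∈ A) ∧ l.Chain' D.Adjacent

/-- A partial coloring: a domain of colored strands and a color function
(only its values on `dom` are meaningful). -/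
structure PartialColoring (D : Diagram) where
  dom : Finset D.Strand
  col : D.Strand → ℤ

/-- Seed addition at stage `t`: a new strand is colored with the fresh color `t`. -/
def SeedAdd (D : Diagram) (t : ℤ) (P Q : PartialColoring D) : Prop :=
  ∃ s, s ∉ P.dom ∧ Q.dom = insert s P.dom ∧ Q.col s = t ∧
    (∀ u ∈ P.dom, Q.col u = P.col u) ∧ (∀ u ∈ P.dom, P.col u ≠ t)

/-- A coloring move over the crossing `x`: an uncolored under-strand of `x`
inherits the color of the other (already colored) under-strand, the over-strand
of `x` being already colored. -/
def MoveOver (D : Diagram) (x : D.Crossing) (P Q : PartialColoring D) : Prop :=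
  ∃ sq sp : D.Strand,
    sq ∉ P.dom ∧ sp ∈ P.dom ∧ D.overStrand x ∈ P.dom ∧
    ((D.under1 x = sq ∧ D.under2 x = sp) ∨ (D.under1 x = sp ∧ D.under2 x = sq)) ∧
    Q.dom = insert sq P.dom ∧ Q.col sq = P.col sp ∧
    (∀ u ∈ P.dom, Q.col u = P.col u)

def Move (D : Diagram) (P Q : PartialColoring D) : Prop := ∃ x, MoveOver D x P Q

/-- A (partial) coloring sequence of length `J`, starting from the vacuous coloring,
each step a seed addition (with fresh color = stage) or a coloring move. -/
structure ColoringSeq (D : Diagram) (J : ℕ) where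
  c : ℕ → PartialColoring D
  init : (c 0).dom = ∅
  step : ∀ t : ℕ, t + 1 ≤ J →
    SeedAdd D ((t : ℤ) + 1) (c t) (c (t + 1)) ∨ Move D (c t) (c (t + 1))

namespace ColoringSeq

variable {D : Diagram} {J : ℕ}

/-- A completed coloring sequence colors all strands. -/
def Completed (S : ColoringSeq D J) : Prop := (S.c J).dom = Finset.univ

/-- `s` is colored at stage `t`. -/
def StageOf (S : ColoringSeq D J) (s : D.Strand) (t : ℕ) : Prop :=
  1 ≤ t ∧ t ≤ J ∧ s ∈ (S.c t).dom ∧ s ∉ (S.c (t - 1)).dom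

/-- `s` is colored at stage `t` via a seed addition. -/
def SeedAt (S : ColoringSeq D J) (s : D.Strand) (t : ℕ) : Prop :=
  S.StageOf s t ∧ SeedAdd D (t : ℤ) (S.c (t - 1)) (S.c t)

/-- `s` is a seed strand of the sequence. -/
def IsSeedStrand (S : ColoringSeq D J) (s : D.Strand) : Prop := ∃ t, S.SeedAt s t

/-- The crossing `x` is multi-colored at stage `t`: all three of its strands are
colored and its two under-strands have different colors. -/
def MultiColoredAt (S : ColoringSeq D J) (x : D.Crossing) (t : ℕ) : Prop :=
  D.overStrand x ∈ (S.c t).dom ∧ D.under1 x ∈ (S.c t).dom ∧ D.under2 x ∈ (S.c t).dom ∧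
  (S.c t).col (D.under1 x) ≠ (S.c t).col (D.under2 x)

def MultiColored (S : ColoringSeq D J) (x : D.Crossing) : Prop :=
  ∃ t ≤ J, S.MultiColoredAt x t

/-- `t` is the (first) stage at which `x` becomes multi-colored. -/
def McStage (S : ColoringSeq D J) (x : D.Crossing) (t : ℕ) : Prop :=
  t ≤ J ∧ S.MultiColoredAt x t ∧ ∀ u < t, ¬ S.MultiColoredAt x u

end ColoringSeq

/-- A diagram is non-trivial if every completed coloring sequence on it uses at
least two seed additions (equivalently, it is not a diagram of the unknot). -/
def NonTrivialDiagram (D : Diagram) : Prop :=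
  ∀ (J : ℕ) (S : ColoringSeq D J), S.Completed →
    2 ≤ Set.ncard {s : D.Strand | S.IsSeedStrand s}
/-! Δ-orderings and attached sequences. -/

/-- A Δ-ordering of a completed coloring sequence: positions for strands and
(multi-colored) crossings, listing elements in order of stages, with the newly
colored strand of each stage listed before the crossings that become
multi-colored at that stage. -/
structure DeltaOrdering {D : Diagram} {J : ℕ} (S : ColoringSeq D J) where
  posS : D.Strand → ℕ
  posC : D.Crossing → ℕ
  stage : D.Strand → ℕ
  cstage : D.Crossing → ℕ
  stage_spec : ∀ s, S.StageOf s (stage s)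
  cstage_spec : ∀ x, S.MultiColored x → S.McStage x (cstage x)
  posS_inj : Function.Injective posS
  posC_inj : ∀ x y, S.MultiColored x → S.MultiColored y → posC x = posC y → x = y
  posSC_ne : ∀ s x, S.MultiColored x → posS s ≠ posC x
  mono_SS : ∀ s s', stage s < stage s' → posS s < posS s'
  mono_SC : ∀ s x, S.MultiColored x → stage s ≤ cstage x → posS s < posC x
  mono_CS : ∀ x s, S.MultiColored x → cstage x < stage s → posC x < posS s

/-- Position of an element (strand or crossing) in a Δ-ordering. -/
def posE {D : Diagram} {J : ℕ} {S : ColoringSeq D J} (Δ : DeltaOrdering S) :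
    D.Strand ⊕ D.Crossing → ℕ :=
  Sum.elim Δ.posS Δ.posC

/-- `l` is the restriction of the Δ-ordering to the seed strands and multi-colored
crossings, encoded as a list of Booleans (`true` = seed strand, `false` =
multi-colored crossing) in the order given by the Δ-ordering. -/
def RestrictedDelta {D : Diagram} {J : ℕ} {S : ColoringSeq D J} (Δ : DeltaOrdering S)
    (l : List Bool) : Prop :=
  ∃ e : List (D.Strand ⊕ D.Crossing),
    l = e.map (Sum.elim (fun _ => true) (fun _ => false)) ∧
    e.Nodup ∧
    (∀ s : D.Strand, Sum.inl s ∈ e ↔ S.IsSeedStrand s) ∧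
    (∀ x : D.Crossing, Sum.inr x ∈ e ↔ S.MultiColored x) ∧
    e.Pairwise (fun a b => posE Δ a < posE Δ b)

/-- The attached sequence of a restricted Δ-ordering: `a 0 = 2`; each seed strand
after the first contributes `+2` and each multi-colored crossing contributes `-2`. -/
def attachedTerm (l : List Bool) : ℕ → ℤ
  | 0 => 2
  | (j + 1) => 2 + 2 * (((l.take (j + 1)).drop 1).count true : ℤ)
      - 2 * ((l.take (j + 1)).count false : ℤ)

/-- The sum `Σ_{i=1}^{N} a_i` of the attached sequence. -/
def WSum (l : List Bool) : ℤ := ∑ i ∈ Finset.range l.length, attachedTerm l (i + 1)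

/-- The set of values `Σ a_i` of completed coloring sequences on `D`;
the Wirtinger width `𝕎(D)` is its least element. -/
def DiagWSet (D : Diagram) : Set ℤ :=
  {w | ∃ (J : ℕ) (S : ColoringSeq D J) (Δ : DeltaOrdering S) (l : List Bool),
      S.Completed ∧ RestrictedDelta Δ l ∧ w = WSum l}
/-! Geometric framework: knots in ℝ³, Morse position, width, planar diagrams. -/

noncomputable section

/-- The standard height function on ℝ³, `h(x,y,z) = z`. -/
def ht3 (p : ℝ × ℝ × ℝ) : ℝ := p.2.2

/-- Projection to the yz-plane, `p(x,y,z) = (y,z)`. -/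
def proj23 (p : ℝ × ℝ × ℝ) : ℝ × ℝ := (p.2.1, p.2.2)

/-- Height of a point of the yz-plane. -/
def ht2 (p : ℝ × ℝ) : ℝ := p.2

/-- An embedded knot in ℝ³, parametrized by ℝ with period 1. -/
structure KnotEmb where
  γ : ℝ → ℝ × ℝ × ℝ
  periodic : Function.Periodic γ 1
  cont : Continuous γ
  inj : Set.InjOn γ (Set.Ico 0 1)

/-- Ambient isotopy of knots (through embeddings). -/
def Isotopic (K K' : KnotEmb) : Prop :=
  ∃ H : ℝ → ℝ → ℝ × ℝ × ℝ,
    Continuous (fun p : ℝ × ℝ => H p.1 p.2) ∧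
    (∀ u ∈ Set.Icc (0:ℝ) 1, Function.Periodic (H u) 1 ∧ Set.InjOn (H u) (Set.Ico 0 1)) ∧
    H 0 = K.γ ∧ H 1 = K'.γ

/-- A knot in Morse position with respect to the height function: a finite set of
isolated critical parameters (each a local max or local min of the height, with
distinct critical values), and no other local extrema. -/
structure MorseKnot extends KnotEmb where
  crit : Finset ℝ
  crit_sub : ∀ c ∈ crit, c ∈ Set.Ico (0:ℝ) 1
  crit_extr : ∀ c ∈ crit,
    IsLocalMax (fun t => ht3 (γ t)) c ∨ IsLocalMin (fun t => ht3 (γ t)) c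
  noncrit : ∀ t ∈ Set.Ico (0:ℝ) 1, t ∉ crit →
    ¬ IsLocalMax (fun t => ht3 (γ t)) t ∧ ¬ IsLocalMin (fun t => ht3 (γ t)) t
  crit_val_inj : Set.InjOn (fun t => ht3 (γ t)) crit

/-- The number of points of the knot at height `r` (w(r) = |K ∩ h⁻¹(r)|). -/
def levelCount (K : MorseKnot) (r : ℝ) : ℕ :=
  Set.ncard {t | t ∈ Set.Ico (0:ℝ) 1 ∧ ht3 (K.γ t) = r}

/-- `w` is the Gabai width of the Morse embedding `K`: the sum of level counts at
regular values interleaving the critical values `c 1 > c 2 > … > c N`. -/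
def IsWidth (K : MorseKnot) (w : ℕ) : Prop :=
  ∃ (N : ℕ) (c : ℕ → ℝ) (r : ℕ → ℝ),
    N = K.crit.card ∧
    (∀ i j, 1 ≤ i → i < j → j ≤ N → c j < c i) ∧
    (∀ v, (∃ t ∈ K.crit, ht3 (K.γ t) = v) ↔ ∃ i, 1 ≤ i ∧ i ≤ N ∧ c i = v) ∧
    (∀ i, 1 ≤ i → i ≤ N - 1 → c (i + 1) < r i ∧ r i < c i) ∧
    w = ∑ i ∈ Finset.Icc 1 (N - 1), levelCount K (r i)

/-- Thin position: the width is minimal over the ambient isotopy class. -/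
def ThinPosition (K : MorseKnot) : Prop :=
  ∀ (K' : MorseKnot) (w w' : ℕ), Isotopic K.toKnotEmb K'.toKnotEmb →
    IsWidth K w → IsWidth K' w' → w ≤ w'

/-- `w` is the Gabai width of the knot type of `K0`. -/
def IsGabaiWidth (K0 : KnotEmb) (w : ℕ) : Prop :=
  IsLeast {w | ∃ K' : MorseKnot, Isotopic K0 K'.toKnotEmb ∧ IsWidth K' w} w

/-- A knot diagram realized in the (y,z)-plane: each strand is an embedded arc,
each crossing a point, under-strands end at their crossings and the over-strand
passes through. -/
structure PlanarDiagram extends Diagram where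
  arc : Strand → ℝ → ℝ × ℝ
  arc_cont : ∀ s, Continuous (arc s)
  arc_inj : ∀ s, Set.InjOn (arc s) (Set.Ico 0 1)
  crossPt : Crossing → ℝ × ℝ
  crossPt_inj : Function.Injective crossPt
  under1_end : ∀ x, arc (under1 x) 0 = crossPt x ∨ arc (under1 x) 1 = crossPt x
  under2_end : ∀ x, arc (under2 x) 0 = crossPt x ∨ arc (under2 x) 1 = crossPt x
  over_mem : ∀ x, crossPt x ∈ arc (overStrand x) '' Set.Icc 0 1

/-- `PD` is a diagram of the knot `K0`: projecting `K0` to the yz-plane yields the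
union of the strands, and every crossing is a double point of the projection. -/
def DiagramOf (K0 : KnotEmb) (PD : PlanarDiagram) : Prop :=
  (proj23 '' Set.range K0.γ = ⋃ s : PD.Strand, PD.arc s '' Set.Icc 0 1) ∧
  ∀ x : PD.Crossing, ∃ p q, p ∈ Set.range K0.γ ∧ q ∈ Set.range K0.γ ∧ p ≠ q ∧
    proj23 p = PD.crossPt x ∧ proj23 q = PD.crossPt x

/-- The height of a strand: the maximal height of its points. -/
def strandH (PD : PlanarDiagram) (s : PD.Strand) : ℝ :=
  sSup ((fun u => ht2 (PD.arc s u)) '' Set.Icc 0 1)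

/-- `h` restricted to the strand `s` has a local extremum at parameter `t`. -/
def LocalExtrAt (PD : PlanarDiagram) (s : PD.Strand) (t : ℝ) : Prop :=
  IsLocalMaxOn (fun u => ht2 (PD.arc s u)) (Set.Icc 0 1) t ∨
  IsLocalMinOn (fun u => ht2 (PD.arc s u)) (Set.Icc 0 1) t

/-- `h|_s` attains its maximum in the interior of `s`. -/
def InteriorMax (PD : PlanarDiagram) (s : PD.Strand) : Prop :=
  ∃ t ∈ Set.Ioo (0:ℝ) 1, ∀ u ∈ Set.Icc (0:ℝ) 1, ht2 (PD.arc s u) ≤ ht2 (PD.arc s t)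

/-- `h|_s` attains its minimum in the interior of `s`. -/
def InteriorMin (PD : PlanarDiagram) (s : PD.Strand) : Prop :=
  ∃ t ∈ Set.Ioo (0:ℝ) 1, ∀ u ∈ Set.Icc (0:ℝ) 1, ht2 (PD.arc s t) ≤ ht2 (PD.arc s u)

/-- The diagram is in general position with respect to the height function: all
crossings and all critical points of the height on the diagram have distinct
heights. -/
def GeneralPosition (PD : PlanarDiagram) : Prop :=
  (Function.Injective fun x => ht2 (PD.crossPt x)) ∧
  (Function.Injective fun s => strandH PD s) ∧
  (∀ (s : PD.Strand) (t : ℝ) (x : PD.Crossing), t ∈ Set.Ioo (0:ℝ) 1 →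
    LocalExtrAt PD s t → ht2 (PD.arc s t) ≠ ht2 (PD.crossPt x)) ∧
  (∀ (s s' : PD.Strand) (t t' : ℝ), t ∈ Set.Ioo (0:ℝ) 1 → t' ∈ Set.Ioo (0:ℝ) 1 →
    LocalExtrAt PD s t → LocalExtrAt PD s' t' → (s ≠ s' ∨ t ≠ t') →
    ht2 (PD.arc s t) ≠ ht2 (PD.arc s' t'))

/-- `r` is a regular value of the height function restricted to the diagram. -/
def RegularValue (PD : PlanarDiagram) (r : ℝ) : Prop :=
  (∀ x : PD.Crossing, r ≠ ht2 (PD.crossPt x)) ∧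
  ∀ (s : PD.Strand) (t : ℝ), t ∈ Set.Icc (0:ℝ) 1 → LocalExtrAt PD s t →
    r ≠ ht2 (PD.arc s t)

/-- The crossing `x` is an endpoint of the strand `s`. -/
def endAt (PD : PlanarDiagram) (s : PD.Strand) (x : PD.Crossing) : Prop :=
  PD.arc s 0 = PD.crossPt x ∨ PD.arc s 1 = PD.crossPt x

/-- `s` is the falling strand of the crossing `x`: `s` is an under-strand ending at
`x` and the height along `s` has a local maximum there. -/
def FallingAt (PD : PlanarDiagram) (s : PD.Strand) (x : PD.Crossing) : Prop :=
  ∃ t₀ : ℝ, (t₀ = 0 ∨ t₀ = 1) ∧ PD.arc s t₀ = PD.crossPt x ∧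
    IsLocalMaxOn (fun u => ht2 (PD.arc s u)) (Set.Icc 0 1) t₀

/-- A coloring of the diagram `D` by height: strands are colored in order of
decreasing height; a strand gets a seed addition iff its height is attained in
its interior, and otherwise inherits its color via a coloring move over its
higher incident crossing. -/
structure ColorByHeight (PD : PlanarDiagram) (J : ℕ) (S : ColoringSeq PD.toDiagram J) where
  compl : S.Completed
  e : Fin J → PD.Strand
  e_bij : Function.Bijective e
  e_anti : ∀ i j : Fin J, i < j → strandH PD (e j) < strandH PD (e i)
  stages : ∀ i : Fin J,
    (S.c (i.val + 1)).dom = insert (e i) (S.c i.val).dom ∧ e i ∉ (S.c i.val).dom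
  seed_iff : ∀ i : Fin J,
    (SeedAdd PD.toDiagram ((i.val : ℤ) + 1) (S.c i.val) (S.c (i.val + 1)) ↔
      InteriorMax PD (e i))
  move_higher : ∀ i : Fin J, ¬ InteriorMax PD (e i) →
    ∃ x : PD.Crossing, endAt PD (e i) x ∧
      (∀ x', endAt PD (e i) x' → ht2 (PD.crossPt x') ≤ ht2 (PD.crossPt x)) ∧
      MoveOver PD.toDiagram x (S.c i.val) (S.c (i.val + 1))

/-- `w` is the Wirtinger width of the knot type of `K0`: the least value of
`Σ a_i` over diagrams of the knot type and completed coloring sequences. -/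
def IsWirtingerWidth (K0 : KnotEmb) (w : ℤ) : Prop :=
  IsLeast {w | ∃ (K' : KnotEmb) (PD : PlanarDiagram),
    Isotopic K0 K' ∧ DiagramOf K' PD ∧ w ∈ DiagWSet PD.toDiagram} w

end

/-! Every Δ-ordering lists the seed strands and multi-colored crossings in nondecreasing
order of the key `2 t` (a strand colored at stage `t`) or `2 t + 1` (a crossing
multi-colored at stage `t`). Stages are unique, so the key depends only on the coloring
sequence; two nondecreasing enumerations of the same finite set have the same key
sequence, and the Boolean label of an element is the parity of its key. Hence the
restricted Δ-orderings, and everything computed from them, coincide. -/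

namespace ColoringSeq

variable {D : Diagram} {J : ℕ} (S : ColoringSeq D J)

theorem dom_subset_succ {t : ℕ} (ht : t + 1 ≤ J) : (S.c t).dom ⊆ (S.c (t + 1)).dom := by
  rcases S.step t ht with ⟨_, _, hdom, _⟩ | ⟨_, _, _, _, _, _, _, hdom, _⟩ <;>
    exact hdom ▸ Finset.subset_insert _ _

theorem dom_mono {a b : ℕ} (hab : a ≤ b) (hb : b ≤ J) : (S.c a).dom ⊆ (S.c b).dom := by
  induction b, hab using Nat.le_induction with
  | base => exact subset_rfl
  | succ n _ ih => exact (ih (by omega)).trans (S.dom_subset_succ hb)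

theorem exists_stageOf {t : ℕ} (h1 : 1 ≤ t) (h2 : t ≤ J) : ∃ s, S.StageOf s t := by
  obtain ⟨n, rfl⟩ : ∃ n, t = n + 1 := ⟨t - 1, by omega⟩
  rcases S.step n h2 with ⟨s, hs, hdom, _⟩ | ⟨_, s, _, hs, _, _, _, hdom, _⟩ <;>
    exact ⟨s, h1, h2, hdom ▸ Finset.mem_insert_self _ _, by simpa using hs⟩

variable {S}

theorem StageOf.le {s : D.Strand} {t t' : ℕ} (h : S.StageOf s t) (h' : S.StageOf s t') :
    t ≤ t' := by
  obtain ⟨-, hJ, -, hnot⟩ := h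
  obtain ⟨-, -, hmem, -⟩ := h'
  by_contra hlt
  exact hnot (S.dom_mono (by omega : t' ≤ t - 1) (by omega) hmem)

theorem StageOf.eq {s : D.Strand} {t t' : ℕ} (h : S.StageOf s t) (h' : S.StageOf s t') :
    t = t' :=
  le_antisymm (h.le h') (h'.le h)

theorem McStage.eq {x : D.Crossing} {t t' : ℕ} (h : S.McStage x t) (h' : S.McStage x t') :
    t = t' := by
  by_contra hne
  rcases Nat.lt_or_gt_of_ne hne with hlt | hlt
  · exact h'.2.2 t hlt h.2.1
  · exact h.2.2 t' hlt h'.2.1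

theorem McStage.one_le {x : D.Crossing} {t : ℕ} (h : S.McStage x t) : 1 ≤ t := by
  obtain ⟨-, ⟨hmem, -⟩, -⟩ := h
  exact Nat.pos_of_ne_zero fun ht => by simp [ht, S.init] at hmem

end ColoringSeq

namespace DeltaOrdering

variable {D : Diagram} {J : ℕ} {S : ColoringSeq D J}

def stageKey (Δ : DeltaOrdering S) : D.Strand ⊕ D.Crossing → ℕ :=
  Sum.elim (fun s => 2 * Δ.stage s) (fun x => 2 * Δ.cstage x + 1)

theorem stageKey_eq (Δ Δ' : DeltaOrdering S) {a : D.Strand ⊕ D.Crossing}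
    (ha : ∀ x, a = .inr x → S.MultiColored x) : Δ.stageKey a = Δ'.stageKey a := by
  rcases a with s | x
  · simp only [stageKey, Sum.elim_inl, (Δ.stage_spec s).eq (Δ'.stage_spec s)]
  · have hx := ha x rfl
    simp only [stageKey, Sum.elim_inr, (Δ.cstage_spec x hx).eq (Δ'.cstage_spec x hx)]

/-- Crossings multi-colored at different stages are separated by the strand colored at the
later stage. -/
theorem posC_lt_of_cstage_lt (Δ : DeltaOrdering S) {x y : D.Crossing} (hx : S.MultiColored x)
    (hy : S.MultiColored y) (hlt : Δ.cstage x < Δ.cstage y) : Δ.posC x < Δ.posC y := by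
  have hy' := Δ.cstage_spec y hy
  obtain ⟨s, hs⟩ := S.exists_stageOf hy'.one_le hy'.1
  have hst : Δ.stage s = Δ.cstage y := (Δ.stage_spec s).eq hs
  exact (Δ.mono_CS x s hx (by omega)).trans (Δ.mono_SC s y hy hst.le)

theorem posE_lt_of_stageKey_lt (Δ : DeltaOrdering S) {a b : D.Strand ⊕ D.Crossing}
    (ha : ∀ x, a = .inr x → S.MultiColored x) (hb : ∀ y, b = .inr y → S.MultiColored y)
    (h : Δ.stageKey a < Δ.stageKey b) : posE Δ a < posE Δ b := by
  rcases a with s | x <;> rcases b with s' | y <;>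
    simp only [stageKey, posE, Sum.elim_inl, Sum.elim_inr] at h ⊢
  · exact Δ.mono_SS s s' (by omega)
  · exact Δ.mono_SC s y (hb y rfl) (by omega)
  · exact Δ.mono_CS x s' (ha x rfl) (by omega)
  · exact Δ.posC_lt_of_cstage_lt (ha x rfl) (hb y rfl) (by omega)

theorem pairwise_stageKey_le (Δ : DeltaOrdering S) {Δ₀ : DeltaOrdering S}
    {e : List (D.Strand ⊕ D.Crossing)} (he : ∀ x, .inr x ∈ e → S.MultiColored x)
    (hpos : e.Pairwise (fun a b => posE Δ₀ a < posE Δ₀ b)) :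
    e.Pairwise (fun a b => Δ.stageKey a ≤ Δ.stageKey b) := by
  refine hpos.imp_of_mem fun {a b} ha hb hab => ?_
  have ha' : ∀ x, a = .inr x → S.MultiColored x := fun x hx => he x (hx ▸ ha)
  have hb' : ∀ y, b = .inr y → S.MultiColored y := fun y hy => he y (hy ▸ hb)
  rw [Δ.stageKey_eq Δ₀ ha', Δ.stageKey_eq Δ₀ hb']
  exact le_of_not_gt fun h => (Δ₀.posE_lt_of_stageKey_lt hb' ha' h).asymm hab

theorem label_eq_decide_even_stageKey (Δ : DeltaOrdering S) (a : D.Strand ⊕ D.Crossing) :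
    Sum.elim (fun _ => true) (fun _ => false) a = decide (Even (Δ.stageKey a)) := by
  rcases a with s | x <;> simp [stageKey]

end DeltaOrdering

theorem attached_sequence_well_defined_general
    (D : Diagram) (J : ℕ) (S : ColoringSeq D J)
    (Δ Δ' : DeltaOrdering S) (l l' : List Bool)
    (hl : RestrictedDelta Δ l) (hl' : RestrictedDelta Δ' l') :
    (∀ j, attachedTerm l j = attachedTerm l' j) ∧ WSum l = WSum l' := by
  obtain ⟨e, rfl, hnd, hinl, hinr, hpos⟩ := hl
  obtain ⟨e', rfl, hnd', hinl', hinr', hpos'⟩ := hl'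
  have hperm : e.Perm e' := by
    rw [List.perm_ext_iff_of_nodup hnd hnd']
    rintro (s | x)
    · rw [hinl, hinl']
    · rw [hinr, hinr']
  have hkeys : e.map Δ.stageKey = e'.map Δ.stageKey :=
    (hperm.map _).eq_of_pairwise'
      (List.pairwise_map.mpr (Δ.pairwise_stageKey_le (fun x => (hinr x).mp) hpos))
      (List.pairwise_map.mpr (Δ.pairwise_stageKey_le (fun x => (hinr' x).mp) hpos'))
  have hlabels : ∀ e₀ : List (D.Strand ⊕ D.Crossing),
      e₀.map (Sum.elim (fun _ => true) (fun _ => false)) =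
        (e₀.map Δ.stageKey).map (fun n => decide (Even n)) := fun e₀ => by
    rw [List.map_map]
    exact List.map_congr_left fun a _ => Δ.label_eq_decide_even_stageKey a
  rw [hlabels e, hlabels e', hkeys]
  exact ⟨fun _ => rfl, rfl⟩

/-- Any two Δ-orderings of the same completed coloring sequence yield the same
attached sequence, hence the same total `Σ a_i`: the Wirtinger width contribution
of a completed coloring sequence is well-defined. -/
theorem attached_sequence_well_defined
    (D : Diagram) (J : ℕ) (S : ColoringSeq D J) (hS : S.Completed)
    (Δ Δ' : DeltaOrdering S) (l l' : List Bool)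
    (hl : RestrictedDelta Δ l) (hl' : RestrictedDelta Δ' l') :
    (∀ j, attachedTerm l j = attachedTerm l' j) ∧ WSum l = WSum l' :=
  attached_sequence_well_defined_general D J S Δ Δ' l l' hl hl'
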